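/- arXiv:1305.7449 — 4 statements merged into one kernel-verified Lean document; each statement's English description precedes it below -/
import Mathlib

section
/- Let q be an odd integer and λ a self-conjugate partition of n. Then the set M_q(λ) of partitions obtained from λ by removing a single q-hook contains a self-conjugate partition if and only if q is one of the diagonal hook lengths of λ; in that case it contains a unique self-conjugate partition μ, and the multiset of diagonal hook lengths of μ is that of λ with one occurrence of q removed. -/
open scoped BigOperators

/-- `lam : ℕ → ℕ` represents a partition: weakly decreasing and eventually zero
(`lam i` is the `i`-th part, indexed from `0`). -/
def IsPartitionFun (lam : ℕ → ℕ) : Prop :=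
  (∀ i j, i ≤ j → lam j ≤ lam i) ∧ ∃ N, ∀ i, N ≤ i → lam i = 0

/-- The conjugate (transpose) partition. -/
noncomputable def conjFun (lam : ℕ → ℕ) : ℕ → ℕ := fun j => {i | j < lam i}.ncard

/-- The hook length of the `(i,j)`-node of `lam` (nodes `(i,j)` with `j < lam i`,
both coordinates indexed from `0`). -/
noncomputable def hookLength (lam : ℕ → ℕ) (i j : ℕ) : ℕ :=
  (lam i - j) + (conjFun lam j - i) - 1

/-- The leg length of the `(i,j)`-hook of `lam`. -/
noncomputable def legLength (lam : ℕ → ℕ) (i j : ℕ) : ℕ := conjFun lam j - i - 1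

/-- The partition obtained from `lam` by removing the hook of the `(i,j)`-node. -/
noncomputable def removeHook (lam : ℕ → ℕ) (i j : ℕ) : ℕ → ℕ := fun k =>
  if k < i then lam k
  else if k + 1 < conjFun lam j then lam (k + 1) - 1
  else if k + 1 = conjFun lam j then j
  else lam k

/-- `M_q(lam)`: the set of partitions obtained from `lam` by removing a single `q`-hook. -/
noncomputable def MhookSet (q : ℕ) (lam : ℕ → ℕ) : Set (ℕ → ℕ) :=
  {mu | ∃ i j, j < lam i ∧ hookLength lam i j = q ∧ mu = removeHook lam i j}

/-- The number of diagonal nodes (the Durfee square size) of `lam`. -/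
noncomputable def durfee (lam : ℕ → ℕ) : ℕ := {i | i < lam i}.ncard

/-- The (finite set of distinct) diagonal hook lengths of `lam`. -/
noncomputable def diagHooks (lam : ℕ → ℕ) : Finset ℕ :=
  (Finset.range (durfee lam)).image (fun i => hookLength lam i i)


/-!
Encode a partition `λ` by its β-set `{λ k - k}`. Conjugation sends a β-set `S` to the complement
of `1 - S`, so `λ` is self-conjugate exactly when `x ∈ S ↔ 1 - x ∉ S`, and then the positive
elements `x ∈ S` are the numbers `(h + 1) / 2` for the diagonal hook lengths `h`. Removing a
`q`-hook replaces one element `x ∈ S` by `x - q`. As `x` leaves the set, `1 - x` has to enter it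
for the symmetry to survive, which forces `x - q = 1 - x`, i.e. `q = 2x - 1` is a diagonal hook
length; conversely this exchange keeps the symmetry. Thus `q` determines `x`, hence the β-set of the
self-conjugate `μ`, which in turn determines `μ`.
-/

lemma lt_ncard_setOf_iff {P : ℕ → Prop} (hP : ∀ i j, i ≤ j → P j → P i) (hfin : ∃ N, ¬ P N)
    (i : ℕ) : i < {k | P k}.ncard ↔ P i := by
  classical
  have hfind : ∀ k, k < Nat.find hfin ↔ P k := fun k =>
    ⟨fun hk => not_not.mp (Nat.find_min hfin hk),
      fun hk => lt_of_not_ge fun hle => Nat.find_spec hfin (hP _ _ hle hk)⟩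
  rw [show {k | P k} = Set.Iio (Nat.find hfin) from Set.ext fun k => (hfind k).symm,
    Set.ncard_Iio_nat, hfind]

def betaSet (lam : ℕ → ℕ) : Set ℤ := Set.range fun k : ℕ => (lam k : ℤ) - k

lemma strictAnti_sub_of_antitone {f : ℕ → ℕ} (hf : Antitone f) :
    StrictAnti fun k : ℕ => (f k : ℤ) - k := fun a b hab => by
  have := hf hab.le
  dsimp only
  omega

lemma le_of_betaSet_subset {mu nu : ℕ → ℕ} (hmu : Antitone mu) (hnu : Antitone nu)
    (hsub : betaSet nu ⊆ betaSet mu) {k : ℕ} (hbelow : ∀ l < k, mu l = nu l) : nu k ≤ mu k := by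
  obtain ⟨l, hl⟩ := hsub ⟨k, rfl⟩
  rcases lt_or_ge l k with hlk | hkl
  · have := strictAnti_sub_of_antitone hnu hlk
    simp only [hbelow l hlk] at hl this
    omega
  · have := (strictAnti_sub_of_antitone hmu).antitone hkl
    simp only at hl this
    omega

lemma eq_of_betaSet_eq {mu nu : ℕ → ℕ} (hmu : Antitone mu) (hnu : Antitone nu)
    (h : betaSet mu = betaSet nu) : mu = nu := by
  funext k
  induction k using Nat.strong_induction_on with
  | _ k ih =>
    exact le_antisymm (le_of_betaSet_subset hnu hmu h.le fun l hl => (ih l hl).symm)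
      (le_of_betaSet_subset hmu hnu h.ge ih)

def IsSelfConjSet (S : Set ℤ) : Prop := ∀ x, x ∈ S ↔ 1 - x ∉ S

lemma IsSelfConjSet.insert_sdiff_iff {S : Set ℤ} (hS : IsSelfConjSet S) {x q : ℤ} (hx : x ∈ S)
    (hq : 0 < q) : IsSelfConjSet (insert (x - q) (S \ {x})) ↔ q = 2 * x - 1 := by
  have hx' : 1 - x ∉ S := (hS x).mp hx
  constructor
  · intro h
    -- `x` has left the set, so `1 - x` must have entered it
    have hx_out : x ∉ insert (x - q) (S \ {x}) := by
      simp only [Set.mem_insert_iff, Set.mem_sdiff, Set.mem_singleton_iff]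
      grind
    have := not_not.mp (mt (h x).mpr hx_out)
    simp only [Set.mem_insert_iff, Set.mem_sdiff, Set.mem_singleton_iff] at this
    grind
  · intro hqx y
    have := hS y
    simp only [Set.mem_insert_iff, Set.mem_sdiff, Set.mem_singleton_iff]
    grind

namespace IsPartitionFun

variable {lam : ℕ → ℕ}

lemma antitone (hlam : IsPartitionFun lam) : Antitone lam := fun _ _ h => hlam.1 _ _ h

lemma lt_conjFun_iff (hlam : IsPartitionFun lam) (i j : ℕ) : i < conjFun lam j ↔ j < lam i :=
  lt_ncard_setOf_iff (fun _ _ hab hb => hb.trans_le (hlam.1 _ _ hab))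
    (hlam.2.imp fun N hN => by simp [hN N le_rfl]) i

lemma lt_durfee_iff (hlam : IsPartitionFun lam) (i : ℕ) : i < durfee lam ↔ i < lam i :=
  lt_ncard_setOf_iff (fun _ _ hab hb => (hab.trans_lt hb).trans_le (hlam.1 _ _ hab))
    (hlam.2.imp fun N hN => by simp [hN N le_rfl]) i

lemma hookLength_pos (hlam : IsPartitionFun lam) {i j : ℕ} (hj : j < lam i) :
    0 < hookLength lam i j := by
  have := (hlam.lt_conjFun_iff i j).mpr hj
  unfold hookLength
  omega

lemma mem_betaSet_conj (hlam : IsPartitionFun lam) (x : ℤ) :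
    x ∈ betaSet (conjFun lam) ↔ 1 - x ∉ betaSet lam := by
  constructor
  · rintro ⟨j, rfl⟩ ⟨k, hk⟩
    simp only at hk
    rcases lt_or_ge j (lam k) with h | h
    · have := (hlam.lt_conjFun_iff k j).mpr h
      omega
    · have := mt (hlam.lt_conjFun_iff k j).mp (not_lt.mpr h)
      omega
  · intro hx
    classical
    obtain ⟨N, hN⟩ := hlam.2
    have hex : ∃ k : ℕ, (lam k : ℤ) - k ≤ 1 - x :=
      ⟨N + x.toNat, by rw [hN _ (by omega)]; omega⟩
    set k := Nat.find hex
    have hk : (lam k : ℤ) - k < 1 - x := (Nat.find_spec hex).lt_of_ne fun h => hx ⟨k, h⟩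
    have hbefore : ∀ i < k, 1 - x < (lam i : ℤ) - i := fun i hi =>
      lt_of_not_ge (Nat.find_min hex hi)
    have hconj : conjFun lam (k - x).toNat = k := eq_of_forall_lt_iff fun i => by
      rw [hlam.lt_conjFun_iff]
      constructor
      · intro hi
        by_contra hik
        have := hlam.1 k i (not_lt.mp hik)
        omega
      · intro hik
        have := hbefore (k - 1) (by omega)
        have := hlam.1 i (k - 1) (by omega)
        omega
    exact ⟨(k - x).toNat, by simp only [hconj]; omega⟩

end IsPartitionFun

lemma isPartitionFun_conjFun {lam : ℕ → ℕ} (hlam : IsPartitionFun lam) :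
    IsPartitionFun (conjFun lam) := by
  refine ⟨fun a b hab => le_of_forall_lt fun i hi => ?_, lam 0, fun j hj => ?_⟩
  · rw [hlam.lt_conjFun_iff] at hi ⊢
    exact hab.trans_lt hi
  · by_contra hne
    have := (hlam.lt_conjFun_iff 0 j).mp (Nat.pos_of_ne_zero hne)
    omega

lemma isPartitionFun_removeHook {lam : ℕ → ℕ} (hlam : IsPartitionFun lam) {i j : ℕ}
    (hj : j < lam i) :
    IsPartitionFun (removeHook lam i j) := by
  have hic := (hlam.lt_conjFun_iff i j).mpr hj
  obtain ⟨N, hN⟩ := hlam.2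
  refine ⟨antitone_nat_of_succ_le fun k => ?_, max N (conjFun lam j), fun k hk => ?_⟩
  · have := hlam.1 k (k + 1) k.le_succ
    have := hlam.1 (k + 1) (k + 1 + 1) (k + 1).le_succ
    have := hlam.lt_conjFun_iff k j
    have := hlam.lt_conjFun_iff (k + 1) j
    have := hlam.lt_conjFun_iff (k + 1 + 1) j
    unfold removeHook
    split_ifs <;> omega
  · have := hN k (le_of_max_le_left hk)
    unfold removeHook
    split_ifs <;> omega

namespace IsPartitionFun

variable {lam : ℕ → ℕ}

lemma betaSet_removeHook (hlam : IsPartitionFun lam) {i j : ℕ} (hj : j < lam i) :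
    betaSet (removeHook lam i j) =
      insert ((lam i : ℤ) - i - hookLength lam i j) (betaSet lam \ {(lam i : ℤ) - i}) := by
  have hic := (hlam.lt_conjFun_iff i j).mpr hj
  have hinj := (strictAnti_sub_of_antitone hlam.antitone).injective
  -- row `conjFun lam j - 1` is shortened to length `j`
  have hnew : (lam i : ℤ) - i - hookLength lam i j = j + 1 - conjFun lam j := by
    unfold hookLength
    omega
  ext x
  simp only [hnew, betaSet, Set.mem_insert_iff, Set.mem_sdiff, Set.mem_singleton_iff,
    Set.mem_range]
  constructor
  · rintro ⟨k, rfl⟩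
    unfold removeHook
    split_ifs with hki hkc hkc'
    · exact .inr ⟨⟨k, rfl⟩, hinj.ne (by omega)⟩
    · have := (hlam.lt_conjFun_iff (k + 1) j).mp hkc
      have hval : ((lam (k + 1) - 1 : ℕ) : ℤ) - k = (lam (k + 1) : ℤ) - (k + 1 : ℕ) := by
        push_cast
        omega
      exact .inr ⟨⟨k + 1, hval.symm⟩, hval ▸ hinj.ne (by omega)⟩
    · exact .inl (by omega)
    · exact .inr ⟨⟨k, rfl⟩, hinj.ne (by omega)⟩
  · rintro (rfl | ⟨⟨k, rfl⟩, hne⟩)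
    · exact ⟨conjFun lam j - 1, by unfold removeHook; split_ifs <;> omega⟩
    · have hki : k ≠ i := fun h => hne (h ▸ rfl)
      have := hlam.lt_conjFun_iff k j
      rcases lt_or_gt_of_ne hki with hlt | hgt
      · exact ⟨k, by simp [removeHook, hlt]⟩
      by_cases hkc : k < conjFun lam j
      · obtain _ | k := k
        · omega
        exact ⟨k, by unfold removeHook; split_ifs <;> push_cast <;> omega⟩
      · exact ⟨k, by unfold removeHook; split_ifs <;> omega⟩

lemma conjFun_eq_self_iff (hlam : IsPartitionFun lam) :
    conjFun lam = lam ↔ IsSelfConjSet (betaSet lam) :=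
  ⟨fun h x => by rw [← hlam.mem_betaSet_conj, h],
    fun h => eq_of_betaSet_eq (isPartitionFun_conjFun hlam).antitone hlam.antitone
      (Set.ext fun x => by rw [hlam.mem_betaSet_conj, h x])⟩

lemma mem_diagHooks_iff (hlam : IsPartitionFun lam) (hsc : conjFun lam = lam) (r : ℕ) :
    r ∈ diagHooks lam ↔ ∃ y ∈ betaSet lam, 0 < y ∧ (r : ℤ) = 2 * y - 1 := by
  have hdiag : ∀ i, hookLength lam i i = (lam i - i) + (lam i - i) - 1 := fun i => by
    rw [hookLength, hsc]
  simp only [diagHooks, Finset.mem_image, Finset.mem_range, hlam.lt_durfee_iff, betaSet,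
    Set.mem_range, hdiag]
  constructor
  · rintro ⟨i, hi, rfl⟩
    exact ⟨_, ⟨i, rfl⟩, by omega, by omega⟩
  · rintro ⟨_, ⟨k, rfl⟩, hk, hr⟩
    exact ⟨k, by omega, by omega⟩

lemma exists_betaSet_of_mem_MhookSet (hlam : IsPartitionFun lam) {q : ℕ} {mu : ℕ → ℕ}
    (hmu : mu ∈ MhookSet q lam) :
    IsPartitionFun mu ∧ 0 < q ∧
      ∃ x ∈ betaSet lam, betaSet mu = insert (x - q) (betaSet lam \ {x}) := by
  obtain ⟨i, j, hj, rfl, rfl⟩ := hmu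
  exact ⟨isPartitionFun_removeHook hlam hj, hlam.hookLength_pos hj, _, ⟨i, rfl⟩,
    hlam.betaSet_removeHook hj⟩

lemma exists_betaSet_of_selfConj_mem_MhookSet (hlam : IsPartitionFun lam)
    (hsc : conjFun lam = lam) {q : ℕ} {mu : ℕ → ℕ} (hmu : mu ∈ MhookSet q lam)
    (hmu_sc : conjFun mu = mu) :
    IsPartitionFun mu ∧
      ∃ x ∈ betaSet lam, (q : ℤ) = 2 * x - 1 ∧
        betaSet mu = insert (1 - x) (betaSet lam \ {x}) := by
  obtain ⟨hpart, hq, x, hx, hbeta⟩ := hlam.exists_betaSet_of_mem_MhookSet hmu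
  have hqx : (q : ℤ) = 2 * x - 1 :=
    ((hlam.conjFun_eq_self_iff.mp hsc).insert_sdiff_iff hx (by exact_mod_cast hq)).mp
      (hbeta ▸ hpart.conjFun_eq_self_iff.mp hmu_sc)
  exact ⟨hpart, x, hx, hqx, by rw [hbeta, show x - q = 1 - x by omega]⟩

lemma exists_selfConj_mem_MhookSet (hlam : IsPartitionFun lam) (hsc : conjFun lam = lam)
    {q : ℕ} (hq : q ∈ diagHooks lam) : ∃ mu ∈ MhookSet q lam, conjFun mu = mu := by
  obtain ⟨_, ⟨k, rfl⟩, hk, hqk⟩ := (hlam.mem_diagHooks_iff hsc q).mp hq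
  dsimp only at hk hqk
  have hkk : k < lam k := by omega
  have hhook : hookLength lam k k = q := by
    rw [hookLength, hsc]
    omega
  refine ⟨removeHook lam k k, ⟨k, k, hkk, hhook, rfl⟩, ?_⟩
  rw [(isPartitionFun_removeHook hlam hkk).conjFun_eq_self_iff, hlam.betaSet_removeHook hkk,
    hhook]
  exact ((hlam.conjFun_eq_self_iff.mp hsc).insert_sdiff_iff ⟨k, rfl⟩ (by omega)).mpr hqk

end IsPartitionFun

theorem stmt_6_general (q : ℕ) (lam : ℕ → ℕ) (hlam : IsPartitionFun lam)
    (hsc : conjFun lam = lam) :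
    ((∃ mu ∈ MhookSet q lam, conjFun mu = mu) ↔ q ∈ diagHooks lam) ∧
    (∀ mu1 ∈ MhookSet q lam, ∀ mu2 ∈ MhookSet q lam,
      conjFun mu1 = mu1 → conjFun mu2 = mu2 → mu1 = mu2) ∧
    (∀ mu ∈ MhookSet q lam, conjFun mu = mu → diagHooks mu = (diagHooks lam).erase q) := by
  have key := fun mu (hmu : mu ∈ MhookSet q lam) ↦
    hlam.exists_betaSet_of_selfConj_mem_MhookSet hsc hmu
  refine ⟨⟨fun ⟨mu, hmu, hmu_sc⟩ => ?_, hlam.exists_selfConj_mem_MhookSet hsc⟩,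
    fun mu₁ hmu₁ mu₂ hmu₂ hsc₁ hsc₂ => ?_, fun mu hmu hmu_sc => ?_⟩
  · obtain ⟨-, x, hx, hqx, -⟩ := key mu hmu hmu_sc
    exact (hlam.mem_diagHooks_iff hsc q).mpr ⟨x, hx, by omega, hqx⟩
  · obtain ⟨hpart₁, x₁, -, hqx₁, hbeta₁⟩ := key mu₁ hmu₁ hsc₁
    obtain ⟨hpart₂, x₂, -, hqx₂, hbeta₂⟩ := key mu₂ hmu₂ hsc₂
    obtain rfl : x₁ = x₂ := by omega
    exact eq_of_betaSet_eq hpart₁.antitone hpart₂.antitone (hbeta₁.trans hbeta₂.symm)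
  · obtain ⟨hpart, x, -, hqx, hbeta⟩ := key mu hmu hmu_sc
    ext r
    rw [Finset.mem_erase, hpart.mem_diagHooks_iff hmu_sc, hlam.mem_diagHooks_iff hsc, hbeta]
    simp only [Set.mem_insert_iff, Set.mem_sdiff, Set.mem_singleton_iff]
    grind

/-- Let `q` be odd and `lam` a self-conjugate partition.  Then `M_q(lam)`
contains a self-conjugate partition iff `q` is one of the diagonal hook lengths of `lam`;
in that case the self-conjugate member `mu` of `M_q(lam)` is unique, and its diagonal hook
lengths are those of `lam` with the occurrence of `q` removed. -/
theorem stmt_6 (q : ℕ) (hq : Odd q) (lam : ℕ → ℕ) (hlam : IsPartitionFun lam)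
    (hsc : conjFun lam = lam) :
    ((∃ mu ∈ MhookSet q lam, conjFun mu = mu) ↔ q ∈ diagHooks lam) ∧
    (∀ mu1 ∈ MhookSet q lam, ∀ mu2 ∈ MhookSet q lam,
      conjFun mu1 = mu1 → conjFun mu2 = mu2 → mu1 = mu2) ∧
    (∀ mu ∈ MhookSet q lam, conjFun mu = mu → diagHooks mu = (diagHooks lam).erase q) :=
  stmt_6_general q lam hlam hsc
end

section
/- Let λ be a partition of n (labelling χ_λ ∈ Irr(S_n)) and q an odd integer. Suppose σ ∈ S_n is a q-cycle with support {n−q+1,…,n}, λ is self-conjugate, and the product σg (for g ∈ A_{n−q}) has cycle type equal to the partition of diagonal hook lengths of λ. If λ has a diagonal hook of length q and μ_λ is the unique self-conjugate partition in M_q(λ), then the difference of the two irreducible constituents of χ_λ restricted to A_n satisfies (ρ_λ^+ − ρ_λ^−)(σg) = ±√((−1)^{(q−1)/2} q) · (ρ_{μ_λ}^+ − ρ_{μ_λ}^−)(g), with the sign determined by the chosen labelling. -/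
open scoped BigOperators

/-- The multiset of diagonal hook lengths of `lam`, with the parts of size `1` dropped,
i.e. the cycle type (in Mathlib's sense, where fixed points are omitted) of a permutation
of cycle type `a(lam)`. -/
noncomputable def diagCycleType (lam : ℕ → ℕ) : Multiset ℕ :=
  (diagHooks lam).val.filter (fun a => 2 ≤ a)

/-- A branch of the complex square root, via the principal complex power. -/
noncomputable def sqrtC (z : ℂ) : ℂ := z ^ ((1 : ℂ) / 2)

/-- The quantity `y_lam = (1/2)·√((-1)^{(n-k)/2}·h_1⋯h_k)` attached to a self-conjugate
partition `lam` of `n` with diagonal hook lengths `h_1 > ⋯ > h_k`. -/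
noncomputable def ySC (n : ℕ) (lam : ℕ → ℕ) : ℂ :=
  (1 / 2 : ℂ) *
    sqrtC ((-1 : ℂ) ^ ((n - (diagHooks lam).card) / 2) * ∏ h ∈ diagHooks lam, (h : ℂ))

/-!
A self-conjugate `μ ∈ M_q(λ)` comes from a diagonal node of `λ`: removing the rim hook of an
off-diagonal node `(i, j)` shortens exactly one of row `min i j` and column `min i j`. So the
diagonal hook lengths of `μ` are those of `λ` with `q` removed; hence the radicand of `y_λ` is
`(-1)^{(q-1)/2} q` times that of `y_μ`, and `g` has cycle type `a(μ)` whenever `σ g` has cycle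
type `a(λ)`.

As `q` occurs once in `a(λ)`, an even permutation conjugating `σ g` to `σ g'` fixes the cycle
`σ`, so it acts on the support of `σ` as a power of `σ`; correcting it by that (even) power gives
an even permutation of the first `n - q` points conjugating `g` to `g'`. Thus `σ g` and `σ g'`
lie in the same `A_n`-class iff `g` and `g'` lie in the same `A_{n-q}`-class, so both differences
`ρ⁺ - ρ⁻` change sign together, and a sign `ε` chosen at one `g` works for all of them.
-/

open Finset

theorem Set.eq_Iio_ncard_of_isLowerSet {S : Set ℕ} (hS : IsLowerSet S) (hfin : S.Finite) :
    S = Set.Iio S.ncard := by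
  obtain rfl | ⟨m, rfl⟩ := hS.eq_univ_or_Iio
  · exact absurd hfin Set.infinite_univ
  · rw [Set.ncard_Iio_nat]

section Partition

variable {lam : ℕ → ℕ}

theorem IsPartitionFun.antitone_s9 (hlam : IsPartitionFun lam) : Antitone lam :=
  fun i j hij => hlam.1 i j hij

theorem IsPartitionFun.finite_setOf_ne_zero (hlam : IsPartitionFun lam) :
    {i | lam i ≠ 0}.Finite := by
  obtain ⟨N, hN⟩ := hlam.2
  exact (Set.finite_Iio N).subset fun i hi => not_le.mp fun h => hi (hN i h)

theorem IsPartitionFun.lt_durfee_iff_s9 (hlam : IsPartitionFun lam) (k : ℕ) :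
    k < durfee lam ↔ k < lam k := by
  have hlower : IsLowerSet {i | i < lam i} := fun a b hba ha =>
    lt_of_le_of_lt hba (lt_of_lt_of_le ha (hlam.antitone_s9 hba))
  have hfin : {i | i < lam i}.Finite :=
    hlam.finite_setOf_ne_zero.subset fun i (hi : i < lam i) => by simp; omega
  exact (Set.ext_iff.mp (Set.eq_Iio_ncard_of_isLowerSet hlower hfin) k).symm

theorem IsPartitionFun.lt_apply_comm (hlam : IsPartitionFun lam) (hsc : conjFun lam = lam)
    (c m : ℕ) : c < lam m ↔ m < lam c := by
  have hlower : IsLowerSet {i | c < lam i} := fun a b hba ha =>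
    lt_of_lt_of_le ha (hlam.antitone_s9 hba)
  have hfin : {i | c < lam i}.Finite :=
    hlam.finite_setOf_ne_zero.subset fun i (hi : c < lam i) => by simp; omega
  have h := Set.eq_Iio_ncard_of_isLowerSet hlower hfin
  rw [show {i | c < lam i}.ncard = lam c from congrFun hsc c] at h
  exact Set.ext_iff.mp h m

theorem hookLength_self_of_conj_eq (hsc : conjFun lam = lam) (s : ℕ) :
    hookLength lam s s = 2 * (lam s - s) - 1 := by
  rw [hookLength, congrFun hsc s]
  omega

theorem IsPartitionFun.strictAntiOn_hookLength_self (hlam : IsPartitionFun lam)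
    (hsc : conjFun lam = lam) :
    StrictAntiOn (fun s => hookLength lam s s) (Set.Iio (durfee lam)) := by
  intro s _ s' hs' hss
  have := (hlam.lt_durfee_iff_s9 s').mp hs'
  have := hlam.antitone_s9 hss.le
  simp only [hookLength_self_of_conj_eq hsc]
  omega

theorem IsPartitionFun.odd_of_mem_diagHooks (hlam : IsPartitionFun lam)
    (hsc : conjFun lam = lam) {h : ℕ} (hh : h ∈ diagHooks lam) : Odd h := by
  obtain ⟨s, hs, rfl⟩ := mem_image.mp hh
  have := (hlam.lt_durfee_iff_s9 s).mp (mem_range.mp hs)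
  rw [hookLength_self_of_conj_eq hsc]
  exact ⟨lam s - s - 1, by omega⟩

theorem IsPartitionFun.sum_range_eq_sum_range_hookLength_self (hlam : IsPartitionFun lam)
    (hsc : conjFun lam = lam) {N : ℕ} (hN : ∀ i, N ≤ i → lam i = 0) :
    ∑ i ∈ range N, lam i = ∑ s ∈ range N, hookLength lam s s := by
  have hdual := hlam.lt_apply_comm hsc
  have hle : ∀ j, lam j ≤ N := fun j => not_lt.mp fun h => by
    have := (hdual N j).mp h
    rw [hN N le_rfl] at this
    omega
  have hrow : ∀ i, #{j ∈ range i | j < lam i} = min i (lam i) := fun i => by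
    rw [show {j ∈ range i | j < lam i} = range (min i (lam i)) by ext; simp, card_range]
  have hcol : ∀ j, #{i ∈ Ioo j N | j < lam i} = lam j - j - 1 := fun j => by
    rw [show {i ∈ Ioo j N | j < lam i} = Ioo j (lam j) by
      ext i; simp only [mem_filter, mem_Ioo, hdual j i]; have := hle j; omega, Nat.card_Ioo]
  -- count the nodes strictly left of the diagonal column by column instead of row by row
  have hswap : ∑ i ∈ range N, #{j ∈ range i | j < lam i} =
      ∑ j ∈ range N, #{i ∈ Ioo j N | j < lam i} := by
    simp only [card_filter]
    exact sum_comm' fun i j => by simp only [mem_range, mem_Ioo]; omega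
  calc ∑ i ∈ range N, lam i
      = ∑ i ∈ range N, ((lam i - i) + #{j ∈ range i | j < lam i}) :=
        sum_congr rfl fun i _ => by rw [hrow]; omega
    _ = ∑ s ∈ range N, ((lam s - s) + (lam s - s - 1)) := by
        rw [sum_add_distrib, hswap, ← sum_add_distrib]; simp only [hcol]
    _ = ∑ s ∈ range N, hookLength lam s s :=
        sum_congr rfl fun s _ => by rw [hookLength_self_of_conj_eq hsc]; omega

theorem IsPartitionFun.sum_range_eq_sum_diagHooks (hlam : IsPartitionFun lam)
    (hsc : conjFun lam = lam) {N : ℕ} (hN : ∀ i, N ≤ i → lam i = 0) :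
    ∑ i ∈ range N, lam i = ∑ h ∈ diagHooks lam, h := by
  have hdN : durfee lam ≤ N := not_lt.mp fun h => by
    have := (hlam.lt_durfee_iff_s9 N).mp h
    rw [hN N le_rfl] at this
    omega
  rw [hlam.sum_range_eq_sum_range_hookLength_self hsc hN, diagHooks,
    sum_image fun s hs s' hs' => by
      simp only [coe_range] at hs hs'
      exact (hlam.strictAntiOn_hookLength_self hsc).injOn hs hs']
  refine (sum_subset (range_subset_range.mpr hdN) fun s _ hs => ?_).symm
  have := (hlam.lt_durfee_iff_s9 s).not.mp (by simpa using hs)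
  rw [hookLength_self_of_conj_eq hsc]
  omega

theorem removeHook_apply_of_conj_eq (hsc : conjFun lam = lam) (i j k : ℕ) :
    removeHook lam i j k =
      if k < i then lam k
      else if k + 1 < lam j then lam (k + 1) - 1
      else if k + 1 = lam j then j
      else lam k := by
  rw [removeHook, hsc]

theorem IsPartitionFun.eq_of_conj_removeHook_eq (hlam : IsPartitionFun lam)
    (hsc : conjFun lam = lam) {i j : ℕ} (hij : j < lam i)
    (hmu : conjFun (removeHook lam i j) = removeHook lam i j) : i = j := by
  have hdual := hlam.lt_apply_comm hsc
  have hji : i < lam j := (hdual j i).mp hij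
  have hrem := removeHook_apply_of_conj_eq hsc i j
  rcases lt_trichotomy i j with h | h | h
  · -- the rim hook lies right of column `i`, so that column keeps length `lam i`
    have hcol : {k | i < removeHook lam i j k} = Set.Iio (lam i) := by
      ext k
      have := hlam.antitone_s9 h.le
      have := hdual i k
      have := hdual j (k + 1)
      simp only [Set.mem_ofPred_eq, Set.mem_Iio, hrem]
      split_ifs <;> omega
    have hrow : removeHook lam i j i < lam i := by
      have := hlam.antitone_s9 (Nat.le_add_right i 1)
      rw [hrem]
      split_ifs <;> omega
    have hcolrow : conjFun (removeHook lam i j) i = removeHook lam i j i := congrFun hmu i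
    rw [conjFun, hcol, Set.ncard_Iio_nat] at hcolrow
    omega
  · exact h
  · -- the rim hook ends at the bottom node of column `j`, while row `j` is untouched
    have hcol : {k | j < removeHook lam i j k} ⊆ Set.Iio (lam j - 1) := by
      intro k hk
      have := hdual j k
      simp only [Set.mem_ofPred_eq, Set.mem_Iio, hrem] at hk ⊢
      split_ifs at hk <;> omega
    have hcolrow : conjFun (removeHook lam i j) j = removeHook lam i j j := congrFun hmu j
    have hle := Set.ncard_le_ncard hcol (Set.finite_Iio _)
    rw [Set.ncard_Iio_nat] at hle
    rw [hrem, if_pos h, conjFun] at hcolrow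
    omega

theorem IsPartitionFun.durfee_le_apply (hlam : IsPartitionFun lam) {t : ℕ}
    (ht : t < durfee lam) : durfee lam ≤ lam t := by
  have := (hlam.lt_durfee_iff_s9 (durfee lam - 1)).mp (by omega)
  have := hlam.antitone_s9 (show t ≤ durfee lam - 1 by omega)
  omega

theorem IsPartitionFun.durfee_removeHook_self (hlam : IsPartitionFun lam)
    (hsc : conjFun lam = lam) {t : ℕ} (ht : t < lam t) :
    durfee (removeHook lam t t) = durfee lam - 1 := by
  have htd := (hlam.lt_durfee_iff_s9 t).mpr ht
  have := hlam.durfee_le_apply htd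
  have hdiag : {k | k < removeHook lam t t k} = Set.Iio (durfee lam - 1) := by
    ext k
    have := hlam.lt_durfee_iff_s9 k
    have := hlam.lt_durfee_iff_s9 (k + 1)
    simp only [Set.mem_ofPred_eq, Set.mem_Iio, removeHook_apply_of_conj_eq hsc]
    split_ifs <;> omega
  rw [durfee, hdiag, Set.ncard_Iio_nat]

theorem IsPartitionFun.diagHooks_removeHook_self (hlam : IsPartitionFun lam)
    (hsc : conjFun lam = lam) {t : ℕ} (ht : t < lam t)
    (hmu : conjFun (removeHook lam t t) = removeHook lam t t) :
    diagHooks (removeHook lam t t) = (diagHooks lam).erase (hookLength lam t t) := by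
  have htd := (hlam.lt_durfee_iff_s9 t).mpr ht
  have := hlam.durfee_le_apply htd
  have hinj := (hlam.strictAntiOn_hookLength_self hsc).injOn
  -- the diagonal node `k` of `removeHook lam t t` is the diagonal node `skip k` of `lam`
  set skip : ℕ → ℕ := fun k => if k < t then k else k + 1 with hskip
  have hhook : ∀ k < durfee lam - 1,
      hookLength (removeHook lam t t) k k = hookLength lam (skip k) (skip k) := by
    intro k hk
    have := (hlam.lt_durfee_iff_s9 (k + 1)).mp (by omega)
    simp only [hookLength_self_of_conj_eq hsc, hookLength_self_of_conj_eq hmu,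
      removeHook_apply_of_conj_eq hsc, hskip]
    split_ifs <;> omega
  ext a
  simp only [diagHooks, hlam.durfee_removeHook_self hsc ht, mem_erase, mem_image, mem_range]
  constructor
  · rintro ⟨k, hk, rfl⟩
    have hsk : skip k < durfee lam := by simp only [hskip]; split_ifs <;> omega
    refine ⟨fun h => ?_, skip k, hsk, (hhook k hk).symm⟩
    have := hinj hsk htd ((hhook k hk).symm.trans h)
    simp only [hskip] at this
    split_ifs at this <;> omega
  · rintro ⟨hne, s, hs, rfl⟩
    have hst : s ≠ t := fun h => hne (h ▸ rfl)
    refine ⟨if s < t then s else s - 1, by split_ifs <;> omega, ?_⟩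
    rw [hhook _ (by split_ifs <;> omega)]
    simp only [hskip]
    split_ifs <;> first | rfl | (congr 1 <;> omega)

theorem IsPartitionFun.diagHooks_eq_erase_of_mem_MhookSet {mu : ℕ → ℕ} {q : ℕ}
    (hlam : IsPartitionFun lam) (hsc : conjFun lam = lam) (hmu : mu ∈ MhookSet q lam)
    (hmusc : conjFun mu = mu) :
    q ∈ diagHooks lam ∧ diagHooks mu = (diagHooks lam).erase q := by
  obtain ⟨i, j, hij, rfl, rfl⟩ := hmu
  obtain rfl := hlam.eq_of_conj_removeHook_eq hsc hij hmusc
  exact ⟨mem_image.mpr ⟨i, mem_range.mpr ((hlam.lt_durfee_iff_s9 i).mpr hij), rfl⟩,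
    hlam.diagHooks_removeHook_self hsc hij hmusc⟩

end Partition

theorem diagCycleType_eq_cons {lam mu : ℕ → ℕ} {q : ℕ} (hq : q ∈ diagHooks lam)
    (hq2 : 2 ≤ q) (hmu : diagHooks mu = (diagHooks lam).erase q) :
    diagCycleType lam = q ::ₘ diagCycleType mu := by
  rw [diagCycleType, diagCycleType, hmu]
  conv_lhs => rw [← insert_erase hq]
  rw [insert_val_of_notMem (notMem_erase q _), Multiset.filter_cons_of_pos _ hq2]

theorem count_diagCycleType_eq_one {lam : ℕ → ℕ} {q : ℕ} (hq : q ∈ diagHooks lam)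
    (hq2 : 2 ≤ q) : (diagCycleType lam).count q = 1 :=
  Multiset.count_eq_one_of_mem ((diagHooks lam).nodup.filter _)
    (Multiset.mem_filter.mpr ⟨hq, hq2⟩)

theorem sqrtC_mul_self (z : ℂ) : sqrtC z * sqrtC z = z := by
  rcases eq_or_ne z 0 with rfl | hz
  · simp [sqrtC]
  · rw [sqrtC, ← Complex.cpow_add _ _ hz]
    norm_num

theorem sqrtC_mul_eq_or (z w : ℂ) :
    sqrtC (z * w) = sqrtC z * sqrtC w ∨ sqrtC (z * w) = -(sqrtC z * sqrtC w) :=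
  mul_self_eq_mul_self_iff.mp <| by
    rw [sqrtC_mul_self, mul_mul_mul_comm, sqrtC_mul_self, sqrtC_mul_self]

theorem two_mul_ySC (n : ℕ) (lam : ℕ → ℕ) :
    2 * ySC n lam =
      sqrtC ((-1 : ℂ) ^ ((n - #(diagHooks lam)) / 2) * ∏ h ∈ diagHooks lam, (h : ℂ)) := by
  rw [ySC]
  ring

theorem two_mul_ySC_eq_or {n q : ℕ} {lam mu : ℕ → ℕ} (hodd : ∀ h ∈ diagHooks lam, Odd h)
    (hq : q ∈ diagHooks lam) (hn : n = ∑ h ∈ diagHooks lam, h)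
    (hmu : diagHooks mu = (diagHooks lam).erase q) :
    2 * ySC n lam = sqrtC ((-1 : ℂ) ^ ((q - 1) / 2) * q) * (2 * ySC (n - q) mu) ∨
      2 * ySC n lam = -(sqrtC ((-1 : ℂ) ^ ((q - 1) / 2) * q) * (2 * ySC (n - q) mu)) := by
  have hins : diagHooks lam = insert q (diagHooks mu) := by rw [hmu, insert_erase hq]
  have hqmu : q ∉ diagHooks mu := by rw [hmu]; exact notMem_erase q _
  have hsum : ∑ h ∈ diagHooks mu, h = 2 * ∑ h ∈ diagHooks mu, h / 2 + #(diagHooks mu) := by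
    rw [card_eq_sum_ones, mul_sum, ← sum_add_distrib]
    refine sum_congr rfl fun h hh => ?_
    have := Nat.odd_iff.mp (hodd h (mem_of_mem_erase (hmu ▸ hh)))
    omega
  have := Nat.odd_iff.mp (hodd q hq)
  rw [hins, sum_insert hqmu] at hn
  have hexp : (n - #(insert q (diagHooks mu))) / 2 =
      (q - 1) / 2 + (n - q - #(diagHooks mu)) / 2 := by
    rw [card_insert_of_notMem hqmu]
    omega
  rw [two_mul_ySC, two_mul_ySC, hins, hexp, prod_insert hqmu, pow_add,
    mul_mul_mul_comm]
  exact sqrtC_mul_eq_or _ _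

namespace Equiv.Perm

variable {α : Type*}

theorem conj_mul_of_commute {σ g h : Perm α} (hh : Commute h σ) :
    h * (σ * g) * h⁻¹ = σ * (h * g * h⁻¹) := by
  rw [← mul_assoc, hh.eq]
  group

variable [DecidableEq α] [Fintype α]

theorem eq_of_mem_cycleFactorsFinset_of_count_eq_one {f c c' : Perm α}
    (hc : c ∈ f.cycleFactorsFinset) (hc' : c' ∈ f.cycleFactorsFinset)
    (hcard : #c.support = #c'.support) (hcount : f.cycleType.count #c.support = 1) :
    c = c' := by
  by_contra hne
  have hsub : {c, c'} ⊆ f.cycleFactorsFinset.filter (fun d => #c.support = #d.support) := by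
    intro d hd
    rcases mem_insert.mp hd with rfl | hd
    · exact mem_filter.mpr ⟨hc, rfl⟩
    · exact mem_filter.mpr ⟨(mem_singleton.mp hd) ▸ hc', (mem_singleton.mp hd) ▸ hcard⟩
  have hcount' : f.cycleType.count #c.support =
      #(f.cycleFactorsFinset.filter (fun d => #c.support = #d.support)) := by
    rw [cycleType_def, Multiset.count_map]
    rfl
  have hle := card_le_card hsub
  rw [card_pair hne, ← hcount', hcount] at hle
  omega

theorem IsCycle.mem_cycleFactorsFinset_mul {σ g : Perm α} (hσ : σ.IsCycle)
    (hg : σ.Disjoint g) :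
    σ ∈ (σ * g).cycleFactorsFinset := by
  rw [hg.cycleFactorsFinset_mul_eq_union, hσ.cycleFactorsFinset_eq_singleton]
  exact mem_union_left _ (mem_singleton_self σ)

theorem IsCycle.commute_of_conj_mul_eq {σ g g' h : Perm α} (hσ : σ.IsCycle)
    (hg : σ.Disjoint g) (hg' : σ.Disjoint g') (hh : h * (σ * g) * h⁻¹ = σ * g')
    (hcount : (σ * g').cycleType.count #σ.support = 1) : Commute h σ := by
  have hconj : h * σ * h⁻¹ ∈ (σ * g').cycleFactorsFinset := by
    rw [← hh]
    exact (mem_cycleFactorsFinset_conj _ _ _).mpr (hσ.mem_cycleFactorsFinset_mul hg)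
  have hfix : h * σ * h⁻¹ = σ :=
    eq_of_mem_cycleFactorsFinset_of_count_eq_one hconj (hσ.mem_cycleFactorsFinset_mul hg')
      card_support_conj (by rwa [card_support_conj])
  calc h * σ = h * σ * h⁻¹ * h := by group
    _ = σ * h := by rw [hfix]

/-- A permutation commuting with a cycle acts on its support as a power of the cycle. -/
theorem IsCycle.exists_disjoint_mul_zpow {σ h : Perm α} (hσ : σ.IsCycle) (hh : Commute h σ) :
    ∃ m : ℤ, σ.Disjoint (h * σ ^ m) := by
  obtain ⟨hsupp, k, hk⟩ := hσ.commute_iff.mp hh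
  refine ⟨-k, fun x => ?_⟩
  by_cases hx : x ∈ σ.support
  · right
    have hy : (σ ^ (-k)) x ∈ σ.support := zpow_apply_mem_support.mpr hx
    rw [mul_apply, ← ofSubtype_subtypePerm_of_mem hsupp hy, ← hk, ← mul_apply, ← zpow_add,
      add_neg_cancel, zpow_zero, one_apply]
  · exact Or.inl (notMem_support.mp hx)

theorem IsCycle.exists_conj_mul_iff {σ g g' : Perm α} (hσ : σ.IsCycle)
    (hσsign : Perm.sign σ = 1) (hg : σ.Disjoint g) (hg' : σ.Disjoint g')
    (hcount : (σ * g').cycleType.count #σ.support = 1) :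
    (∃ h, Perm.sign h = 1 ∧ h * (σ * g) * h⁻¹ = σ * g') ↔
      ∃ h, Perm.sign h = 1 ∧ σ.Disjoint h ∧ h * g * h⁻¹ = g' := by
  constructor
  · rintro ⟨h, hsign, hh⟩
    have hcomm := hσ.commute_of_conj_mul_eq hg hg' hh hcount
    obtain ⟨m, hm⟩ := hσ.exists_disjoint_mul_zpow hcomm
    refine ⟨h * σ ^ m, by rw [map_mul, map_zpow, hsign, hσsign, one_zpow, one_mul], hm, ?_⟩
    rw [conj_mul_of_commute hcomm] at hh
    calc h * σ ^ m * g * (h * σ ^ m)⁻¹ = h * (σ ^ m * g) * (σ ^ m)⁻¹ * h⁻¹ := by group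
      _ = g' := by rw [(hg.commute.zpow_left m).eq, ← mul_left_cancel hh]; group
  · rintro ⟨h, hsign, hh, rfl⟩
    exact ⟨h, hsign, conj_mul_of_commute hh.symm.commute⟩

section LastPoints

variable {n q : ℕ} {σ : Perm (Fin n)}

theorem card_support_of_apply_ne_iff (hσ : ∀ x : Fin n, σ x ≠ x ↔ n - q ≤ (x : ℕ))
    (hqn : q ≤ n) : #σ.support = q := by
  have hsupp : σ.support.map Fin.valEmbedding = Ico (n - q) n := by
    ext y
    simp only [mem_map, mem_support, hσ, Fin.valEmbedding_apply, mem_Ico]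
    exact ⟨fun ⟨x, hx, hxy⟩ => hxy ▸ ⟨hx, x.isLt⟩,
      fun ⟨hy, hyn⟩ => ⟨⟨y, hyn⟩, hy, rfl⟩⟩
  rw [← card_map, hsupp, Nat.card_Ico]
  omega

theorem disjoint_iff_of_apply_ne_iff (hσ : ∀ x : Fin n, σ x ≠ x ↔ n - q ≤ (x : ℕ))
    (g : Perm (Fin n)) : σ.Disjoint g ↔ ∀ a : Fin n, n - q ≤ (a : ℕ) → g a = a := by
  refine ⟨fun hg a ha => (hg a).resolve_left ((hσ a).mpr ha), fun hg a => ?_⟩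
  by_cases ha : n - q ≤ (a : ℕ)
  · exact Or.inr (hg a ha)
  · exact Or.inl (not_not.mp fun h => ha ((hσ a).mp h))

end LastPoints

end Equiv.Perm

theorem exists_sign_eq_mul_of_eq_or {R : Type*} [CommRing R] {a b c x y : R}
    (hx : x = a ∨ x = -a) (hy : y = b ∨ y = -b) (ha : a = c * b ∨ a = -(c * b)) :
    ∃ ε : R, (ε = 1 ∨ ε = -1) ∧ x = ε * c * y := by
  rcases hx with rfl | rfl <;> rcases hy with rfl | rfl <;> rcases ha with rfl | rfl <;>
    first
    | (refine ⟨1, Or.inl rfl, ?_⟩; ring1)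
    | (refine ⟨-1, Or.inr rfl, ?_⟩; ring1)

theorem exists_sign_forall_eq_mul {X R : Type*} [CommRing R] (P : X → Prop)
    (E : X → X → Prop) (f g : X → R) (c : R)
    (hP : ∀ x, P x → ∃ ε : R, (ε = 1 ∨ ε = -1) ∧ f x = ε * c * g x)
    (hE : ∀ x y, P x → P y → E x y → f x = f y ∧ g x = g y)
    (hnE : ∀ x y, P x → P y → ¬ E x y → f x = -f y ∧ g x = -g y) :
    ∃ ε : R, (ε = 1 ∨ ε = -1) ∧ ∀ x, P x → f x = ε * c * g x := by
  by_cases hex : ∃ x₀, P x₀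
  · obtain ⟨x₀, hx₀⟩ := hex
    obtain ⟨ε, hε, hf⟩ := hP x₀ hx₀
    refine ⟨ε, hε, fun x hx => ?_⟩
    by_cases hxx : E x x₀
    · obtain ⟨hfx, hgx⟩ := hE x x₀ hx hx₀ hxx
      rw [hfx, hgx, hf]
    · obtain ⟨hfx, hgx⟩ := hnE x x₀ hx hx₀ hxx
      rw [hfx, hgx, hf]
      ring
  · exact ⟨1, Or.inl rfl, fun x hx => absurd ⟨x, hx⟩ hex⟩

theorem stmt_9_general (n q : ℕ) (hq : Odd q) (hqn : q ≤ n)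
    (lam : ℕ → ℕ) (hlam : IsPartitionFun lam) (hsc : conjFun lam = lam)
    (hn : ∀ N, (∀ i, N ≤ i → lam i = 0) → ∑ i ∈ Finset.range N, lam i = n)
    (mu : ℕ → ℕ) (hmu : mu ∈ MhookSet q lam) (hmusc : conjFun mu = mu)
    (σ : Equiv.Perm (Fin n)) (hσc : σ.IsCycle)
    (hσsupp : ∀ x : Fin n, σ x ≠ x ↔ n - q ≤ (x : ℕ))
    -- the two constituents of the restriction of `χ_lam` to `A_n`
    (ρlamP ρlamM : Equiv.Perm (Fin n) → ℂ)
    (hρlam_class : ∀ h x : Equiv.Perm (Fin n), Equiv.Perm.sign h = 1 →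
      ρlamP (h * x * h⁻¹) = ρlamP x ∧ ρlamM (h * x * h⁻¹) = ρlamM x)
    (hρlam_split : ∀ x : Equiv.Perm (Fin n), Equiv.Perm.sign x = 1 →
      x.cycleType = diagCycleType lam →
      (ρlamP x - ρlamM x = 2 * ySC n lam ∨ ρlamP x - ρlamM x = -(2 * ySC n lam)))
    (hρlam_opp : ∀ x x' : Equiv.Perm (Fin n), Equiv.Perm.sign x = 1 →
      Equiv.Perm.sign x' = 1 →
      x.cycleType = diagCycleType lam → x'.cycleType = diagCycleType lam →
      ¬ (∃ h : Equiv.Perm (Fin n), Equiv.Perm.sign h = 1 ∧ h * x * h⁻¹ = x') →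
      ρlamP x - ρlamM x = -(ρlamP x' - ρlamM x'))
    -- the two constituents of the restriction of `χ_mu` to `A_{n-q}`, viewed as functions
    -- on the permutations of `Fin n` fixing the last `q` points
    (ρmuP ρmuM : Equiv.Perm (Fin n) → ℂ)
    (hρmu_class : ∀ h x : Equiv.Perm (Fin n), Equiv.Perm.sign h = 1 →
      (∀ a : Fin n, n - q ≤ (a : ℕ) → h a = a) → (∀ a : Fin n, n - q ≤ (a : ℕ) → x a = a) →
      ρmuP (h * x * h⁻¹) = ρmuP x ∧ ρmuM (h * x * h⁻¹) = ρmuM x)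
    (hρmu_split : ∀ x : Equiv.Perm (Fin n), Equiv.Perm.sign x = 1 →
      (∀ a : Fin n, n - q ≤ (a : ℕ) → x a = a) →
      x.cycleType = diagCycleType mu →
      (ρmuP x - ρmuM x = 2 * ySC (n - q) mu ∨ ρmuP x - ρmuM x = -(2 * ySC (n - q) mu)))
    (hρmu_opp : ∀ x x' : Equiv.Perm (Fin n), Equiv.Perm.sign x = 1 →
      Equiv.Perm.sign x' = 1 →
      (∀ a : Fin n, n - q ≤ (a : ℕ) → x a = a) → (∀ a : Fin n, n - q ≤ (a : ℕ) → x' a = a) →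
      x.cycleType = diagCycleType mu → x'.cycleType = diagCycleType mu →
      ¬ (∃ h : Equiv.Perm (Fin n), Equiv.Perm.sign h = 1 ∧
          (∀ a : Fin n, n - q ≤ (a : ℕ) → h a = a) ∧ h * x * h⁻¹ = x') →
      ρmuP x - ρmuM x = -(ρmuP x' - ρmuM x')) :
    ∃ ε : ℂ, (ε = 1 ∨ ε = -1) ∧
      ∀ g : Equiv.Perm (Fin n),
        (∀ a : Fin n, n - q ≤ (a : ℕ) → g a = a) → Equiv.Perm.sign g = 1 →
        (σ * g).cycleType = diagCycleType lam →
        ρlamP (σ * g) - ρlamM (σ * g) =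
          ε * sqrtC ((-1 : ℂ) ^ ((q - 1) / 2) * (q : ℂ)) * (ρmuP g - ρmuM g) := by
  obtain ⟨hqlam, hdiag⟩ := hlam.diagHooks_eq_erase_of_mem_MhookSet hsc hmu hmusc
  have hcard : #σ.support = q := Equiv.Perm.card_support_of_apply_ne_iff hσsupp hqn
  have hq2 : 2 ≤ q := hcard ▸ hσc.two_le_card_support
  have hσsign : Equiv.Perm.sign σ = 1 := by rw [hσc.sign, hcard, hq.neg_one_pow, neg_neg]
  have hsign : ∀ g, Equiv.Perm.sign g = 1 → Equiv.Perm.sign (σ * g) = 1 := fun g hg => by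
    rw [map_mul, hσsign, hg, one_mul]
  have hdisj := Equiv.Perm.disjoint_iff_of_apply_ne_iff hσsupp
  have hcycleType : ∀ g, σ.Disjoint g → (σ * g).cycleType = diagCycleType lam →
      g.cycleType = diagCycleType mu := fun g hg h => by
    rw [hg.cycleType_mul, hσc.cycleType, hcard, diagCycleType_eq_cons hqlam hq2 hdiag] at h
    exact (Multiset.cons_inj_right q).mp h
  obtain ⟨N, hN⟩ := hlam.2
  have hy := two_mul_ySC_eq_or (fun _ hh => hlam.odd_of_mem_diagHooks hsc hh) hqlam
    ((hn N hN).symm.trans (hlam.sum_range_eq_sum_diagHooks hsc hN)) hdiag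
  obtain ⟨ε, hε, hall⟩ := exists_sign_forall_eq_mul
    (fun g => σ.Disjoint g ∧ Equiv.Perm.sign g = 1 ∧ (σ * g).cycleType = diagCycleType lam)
    (fun g g' => ∃ h, Equiv.Perm.sign h = 1 ∧ σ.Disjoint h ∧ h * g * h⁻¹ = g')
    (fun g => ρlamP (σ * g) - ρlamM (σ * g)) (fun g => ρmuP g - ρmuM g) _
    (fun g ⟨hg, hgs, hgt⟩ => exists_sign_eq_mul_of_eq_or (hρlam_split _ (hsign g hgs) hgt)
      (hρmu_split g hgs ((hdisj g).mp hg) (hcycleType g hg hgt)) hy)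
    (fun g _ ⟨hg, _, _⟩ _ ⟨h, hs, hh, hconj⟩ => by
      have hlamc := hρlam_class h (σ * g) hs
      have hmuc := hρmu_class h g hs ((hdisj h).mp hh) ((hdisj g).mp hg)
      rw [← hconj, ← Equiv.Perm.conj_mul_of_commute hh.symm.commute, hlamc.1, hlamc.2, hmuc.1,
        hmuc.2]
      exact ⟨rfl, rfl⟩)
    (fun g g' ⟨hg, hgs, hgt⟩ ⟨hg', hgs', hgt'⟩ hne =>
      ⟨hρlam_opp _ _ (hsign g hgs) (hsign g' hgs') hgt hgt'
        ((hσc.exists_conj_mul_iff hσsign hg hg'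
          (by rw [hgt', hcard]; exact count_diagCycleType_eq_one hqlam hq2)).not.mpr hne),
      hρmu_opp g g' hgs hgs' ((hdisj g).mp hg) ((hdisj g').mp hg') (hcycleType g hg hgt)
        (hcycleType g' hg' hgt') (by simpa only [hdisj] using hne)⟩)
  exact ⟨ε, hε, fun g hg hgs hgt => hall g ⟨(hdisj g).mpr hg, hgs, hgt⟩⟩

/-- Let `lam` be a self-conjugate partition of `n`, `q` odd,
`σ ∈ S_n` a `q`-cycle with support `{n-q+1, …, n}`, and suppose `q` is a diagonal hook
length of `lam`, with `mu` the unique self-conjugate partition in `M_q(lam)`.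
If `ρ_lam^±` denote the two irreducible constituents of `χ_lam` restricted to `A_n`
(with the standard values `x_lam ± y_lam` on the two split classes of cycle type `a(lam)`,
and agreeing elsewhere on `A_n`), and similarly `ρ_mu^±` for `A_{n-q}`, then for all
`g ∈ A_{n-q}` such that `σ g` has cycle type `a(lam)`,
`(ρ_lam^+ - ρ_lam^-)(σ g) = ± √((-1)^{(q-1)/2}·q) · (ρ_mu^+ - ρ_mu^-)(g)`,
with the sign `ε` determined by the chosen labelling. -/
theorem stmt_9 (n q : ℕ) (hq : Odd q) (hqn : q ≤ n)
    (lam : ℕ → ℕ) (hlam : IsPartitionFun lam) (hsc : conjFun lam = lam)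
    (hn : ∀ N, (∀ i, N ≤ i → lam i = 0) → ∑ i ∈ Finset.range N, lam i = n)
    (hqdiag : q ∈ diagHooks lam)
    (mu : ℕ → ℕ) (hmu : mu ∈ MhookSet q lam) (hmusc : conjFun mu = mu)
    (σ : Equiv.Perm (Fin n)) (hσc : σ.IsCycle)
    (hσsupp : ∀ x : Fin n, σ x ≠ x ↔ n - q ≤ (x : ℕ))
    -- the two constituents of the restriction of `χ_lam` to `A_n`
    (ρlamP ρlamM : Equiv.Perm (Fin n) → ℂ)
    (hρlam_class : ∀ h x : Equiv.Perm (Fin n), Equiv.Perm.sign h = 1 →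
      ρlamP (h * x * h⁻¹) = ρlamP x ∧ ρlamM (h * x * h⁻¹) = ρlamM x)
    (hρlam_split : ∀ x : Equiv.Perm (Fin n), Equiv.Perm.sign x = 1 →
      x.cycleType = diagCycleType lam →
      (ρlamP x - ρlamM x = 2 * ySC n lam ∨ ρlamP x - ρlamM x = -(2 * ySC n lam)))
    (hρlam_opp : ∀ x x' : Equiv.Perm (Fin n), Equiv.Perm.sign x = 1 →
      Equiv.Perm.sign x' = 1 →
      x.cycleType = diagCycleType lam → x'.cycleType = diagCycleType lam →
      ¬ (∃ h : Equiv.Perm (Fin n), Equiv.Perm.sign h = 1 ∧ h * x * h⁻¹ = x') →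
      ρlamP x - ρlamM x = -(ρlamP x' - ρlamM x'))
    (hρlam_eq : ∀ x : Equiv.Perm (Fin n), Equiv.Perm.sign x = 1 →
      x.cycleType ≠ diagCycleType lam → ρlamP x = ρlamM x)
    -- the two constituents of the restriction of `χ_mu` to `A_{n-q}`, viewed as functions
    -- on the permutations of `Fin n` fixing the last `q` points
    (ρmuP ρmuM : Equiv.Perm (Fin n) → ℂ)
    (hρmu_class : ∀ h x : Equiv.Perm (Fin n), Equiv.Perm.sign h = 1 →
      (∀ a : Fin n, n - q ≤ (a : ℕ) → h a = a) → (∀ a : Fin n, n - q ≤ (a : ℕ) → x a = a) →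
      ρmuP (h * x * h⁻¹) = ρmuP x ∧ ρmuM (h * x * h⁻¹) = ρmuM x)
    (hρmu_split : ∀ x : Equiv.Perm (Fin n), Equiv.Perm.sign x = 1 →
      (∀ a : Fin n, n - q ≤ (a : ℕ) → x a = a) →
      x.cycleType = diagCycleType mu →
      (ρmuP x - ρmuM x = 2 * ySC (n - q) mu ∨ ρmuP x - ρmuM x = -(2 * ySC (n - q) mu)))
    (hρmu_opp : ∀ x x' : Equiv.Perm (Fin n), Equiv.Perm.sign x = 1 →
      Equiv.Perm.sign x' = 1 →
      (∀ a : Fin n, n - q ≤ (a : ℕ) → x a = a) → (∀ a : Fin n, n - q ≤ (a : ℕ) → x' a = a) →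
      x.cycleType = diagCycleType mu → x'.cycleType = diagCycleType mu →
      ¬ (∃ h : Equiv.Perm (Fin n), Equiv.Perm.sign h = 1 ∧
          (∀ a : Fin n, n - q ≤ (a : ℕ) → h a = a) ∧ h * x * h⁻¹ = x') →
      ρmuP x - ρmuM x = -(ρmuP x' - ρmuM x')) :
    ∃ ε : ℂ, (ε = 1 ∨ ε = -1) ∧
      ∀ g : Equiv.Perm (Fin n),
        (∀ a : Fin n, n - q ≤ (a : ℕ) → g a = a) → Equiv.Perm.sign g = 1 →
        (σ * g).cycleType = diagCycleType lam →
        ρlamP (σ * g) - ρlamM (σ * g) =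
          ε * sqrtC ((-1 : ℂ) ^ ((q - 1) / 2) * (q : ℂ)) * (ρmuP g - ρmuM g) :=
  stmt_9_general n q hq hqn lam hlam hsc hn mu hmu hmusc σ hσc hσsupp ρlamP ρlamM hρlam_class
    hρlam_split hρlam_opp ρmuP ρmuM hρmu_class hρmu_split hρmu_opp
end

section
/- Let q be an odd integer, λ a bar partition with q̄-quotient λ^{(q̄)} = (λ^0, λ^1, …, λ^e) where e = (q−1)/2. Then σ(λ) = σ(λ_{(q̄)}) · σ(λ^{(q̄)}), where σ(λ^{(q̄)}) := (−1)^{w − ℓ(λ^0)} and w = |λ^0| + |λ^1| + ⋯ + |λ^e| is the q̄-weight of λ. -/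
/-!
Let `τ(X) = |X| - ℓ(X) + ℓ(λ⁰)` (`barExcess q X`), where `ℓ(λ⁰)` is the number of parts
of `X` divisible by `q`.
Removing a `q`-bar lowers `|X|` by `q` and changes `ℓ(X) - ℓ(λ⁰)` by `0` (shortening a part
or deleting the part `q`) or by `2` (deleting two parts summing to `q`, which `q` divides both
or neither of). Hence `τ(X) ≡ τ(core) + w·q ≡ τ(core) + w (mod 2)`. A least part of a core that
is divisible by `q` could be removed, so a core has none and `τ(core) = |core| - ℓ(core)`.
-/

open scoped BigOperators

/-- `IsBarRemoval q X Y`: the bar partition `Y` (encoded as its finite set of distinct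
positive parts) is obtained from the bar partition `X` by removing a single `q`-bar:
either decrease a part `a > q` to `a - q` (when `a - q` is not already a part), or remove
a part equal to `q`, or remove two distinct parts whose lengths sum to `q`. -/
def IsBarRemoval (q : ℕ) (X Y : Finset ℕ) : Prop :=
  (∃ a ∈ X, q < a ∧ a - q ∉ X ∧ Y = insert (a - q) (X.erase a)) ∨
  (q ∈ X ∧ Y = X.erase q) ∨
  (∃ a b, a ∈ X ∧ b ∈ X ∧ b < a ∧ a + b = q ∧ Y = (X.erase a).erase b)

/-- `BarSeq q k X Y`: `Y` is obtained from `X` by removing `k` successive `q`-bars. -/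
def BarSeq (q : ℕ) : ℕ → Finset ℕ → Finset ℕ → Prop
  | 0, X, Y => Y = X
  | k + 1, X, Y => ∃ Z, IsBarRemoval q X Z ∧ BarSeq q k Z Y

/-- `Y` is a `q̄`-core: no `q`-bar can be removed from it. -/
def IsBarCore (q : ℕ) (Y : Finset ℕ) : Prop := ∀ Z, ¬ IsBarRemoval q Y Z

/-- The sign `σ(X) = (-1)^{|X| - ℓ(X)}` of a bar partition. -/
def barSign (X : Finset ℕ) : ℤˣ := (-1 : ℤˣ) ^ ((∑ a ∈ X, (a : ℤ)) - (X.card : ℤ))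

def barExcess (q : ℕ) (X : Finset ℕ) : ℤ := ∑ a ∈ X, ((a : ℤ) - 1 + if q ∣ a then 1 else 0)

lemma barExcess_eq (q : ℕ) (X : Finset ℕ) :
    barExcess q X = (∑ a ∈ X, (a : ℤ)) - X.card + (X.filter (q ∣ ·)).card := by
  rw [barExcess, Finset.sum_add_distrib, Finset.sum_sub_distrib, Finset.natCast_card_filter]
  simp

namespace IsBarRemoval

variable {q : ℕ} {X Z : Finset ℕ}

lemma zero_notMem (h0 : 0 ∉ X) (h : IsBarRemoval q X Z) : 0 ∉ Z := by
  rcases h with ⟨a, -, hqa, -, rfl⟩ | ⟨-, rfl⟩ | ⟨a, b, -, -, -, -, rfl⟩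
  · rw [Finset.mem_insert]
    rintro (h | h)
    · omega
    · exact h0 (Finset.mem_of_mem_erase h)
  · exact fun h => h0 (Finset.mem_of_mem_erase h)
  · exact fun h => h0 (Finset.mem_of_mem_erase (Finset.mem_of_mem_erase h))

lemma even_barExcess_sub (h : IsBarRemoval q X Z) :
    Even (barExcess q X - barExcess q Z - q) := by
  rcases h with ⟨a, ha, hqa, hnotMem, rfl⟩ | ⟨hq, rfl⟩ | ⟨a, b, ha, hb, hba, hab, rfl⟩
  · have hdvd : q ∣ a - q ↔ q ∣ a := by simp [Nat.dvd_sub_self_right, hqa.not_ge]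
    rw [barExcess, barExcess, Finset.sum_insert (fun h => hnotMem (Finset.mem_of_mem_erase h)),
      Finset.sum_erase_eq_sub ha, Nat.cast_sub hqa.le]
    simp only [hdvd]
    ring_nf
    exact Even.zero
  · rw [barExcess, barExcess, Finset.sum_erase_eq_sub hq, if_pos dvd_rfl]
    ring_nf
    exact Even.zero
  · have hqab : q ∣ a + b := hab ▸ dvd_rfl
    have hdvd : q ∣ b ↔ q ∣ a :=
      ⟨fun h => (Nat.dvd_add_left h).1 hqab, fun h => (Nat.dvd_add_right h).1 hqab⟩
    rw [barExcess, barExcess, Finset.sum_erase_eq_sub (Finset.mem_erase.2 ⟨hba.ne, hb⟩),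
      Finset.sum_erase_eq_sub ha, show (q : ℤ) = a + b by omega]
    simp only [hdvd]
    split_ifs <;> ring_nf <;> decide

end IsBarRemoval

namespace BarSeq

variable {q k : ℕ} {X Y : Finset ℕ}

lemma zero_notMem (h0 : 0 ∉ X) (h : BarSeq q k X Y) : 0 ∉ Y := by
  induction k generalizing X with
  | zero => rwa [show Y = X from h]
  | succ k ih =>
    obtain ⟨Z, hXZ, hZY⟩ := h
    exact ih (hXZ.zero_notMem h0) hZY

lemma even_barExcess_sub (h : BarSeq q k X Y) :
    Even (barExcess q X - barExcess q Y - k * q) := by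
  induction k generalizing X with
  | zero =>
    rw [show Y = X from h]
    simp
  | succ k ih =>
    obtain ⟨Z, hXZ, hZY⟩ := h
    have hsum := hXZ.even_barExcess_sub.add (ih hZY)
    rw [Int.even_iff] at hsum ⊢
    rw [Nat.cast_succ, add_one_mul]
    omega

end BarSeq

lemma IsBarCore.not_dvd {q : ℕ} {Y : Finset ℕ} (hcore : IsBarCore q Y) (h0 : 0 ∉ Y) :
    ∀ a ∈ Y, ¬ q ∣ a := by
  intro a
  induction a using Nat.strong_induction_on with
  | _ a ih =>
    intro ha hdvd
    have hq : q ≠ 0 := by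
      rintro rfl
      exact h0 (zero_dvd_iff.1 hdvd ▸ ha)
    have hqa : q ≤ a := Nat.le_of_dvd (Nat.pos_of_ne_zero (ne_of_mem_of_not_mem ha h0)) hdvd
    rcases hqa.eq_or_lt with rfl | hlt
    · exact hcore _ (Or.inr (Or.inl ⟨ha, rfl⟩))
    · by_cases hsub : a - q ∈ Y
      · exact ih (a - q) (by omega) hsub (Nat.dvd_sub hdvd dvd_rfl)
      · exact hcore _ (Or.inl ⟨a, ha, hlt, hsub, rfl⟩)

/-- For odd `q` and a bar partition `X` with `q̄`-core `Y` and
`q̄`-weight `w`, one has `σ(X) = σ(Y) · σ(quotient)` where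
`σ(quotient) = (-1)^{w - ℓ(λ⁰)}` and `ℓ(λ⁰)` is the number of parts of `X` divisible
by `q`. -/
theorem stmt_11 (q w : ℕ) (hq : Odd q) (X Y : Finset ℕ) (h0 : 0 ∉ X)
    (hseq : BarSeq q w X Y) (hcore : IsBarCore q Y) :
    barSign X =
      barSign Y * (-1 : ℤˣ) ^ ((w : ℤ) - ((X.filter (fun a => q ∣ a)).card : ℤ)) := by
  have hYdvd : Y.filter (q ∣ ·) = ∅ :=
    Finset.filter_eq_empty_iff.2 (hcore.not_dvd (hseq.zero_notMem h0))
  have hexcess := hseq.even_barExcess_sub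
  rw [barExcess_eq, barExcess_eq, hYdvd, Finset.card_empty, Nat.cast_zero] at hexcess
  have hw : Even ((w : ℤ) * q - w) := by
    rw [← mul_sub_one]
    exact (Int.odd_coe_nat q |>.2 hq |>.sub_odd odd_one).mul_left _
  simp only [barSign, ← Int.negOnePow_def, ← Int.negOnePow_add, Int.negOnePow_eq_iff]
  rw [Int.even_iff] at hexcess hw ⊢
  omega
end

section
/- Let λ be a bar partition of n with σ(λ) = 1 (even number of even parts), and suppose μ ∈ M_q(λ) is obtained from λ by removing a bar b of odd length q. If b is a mixed or hook-type bar (so that ℓ(μ) = ℓ(λ) or ℓ(μ) = ℓ(λ)−2), then σ(μ) = −σ(λ); and σ(μ) = σ(λ) if and only if b is a whole part of λ of length q, i.e. μ = λ ∖ {q}. In particular, the set {μ ∈ M_q(λ) : σ(μ) = σ(λ)} is either empty or equals {λ ∖ {q}}. -/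
open scoped BigOperators

/-! A `q`-bar removal changes `∑ a - card` by `-q`, `-(q - 1)` or `-(q - 2)` according as it
shortens a part, deletes the part `q`, or deletes two parts; for odd `q` only the middle one is
even, so only deleting the part `q` preserves the sign. -/

lemma barSign_insert {X : Finset ℕ} {a : ℕ} (ha : a ∉ X) :
    barSign (insert a X) = (-1) ^ ((a : ℤ) - 1) * barSign X := by
  simp only [barSign, Finset.sum_insert ha, Finset.card_insert_of_notMem ha, ← zpow_add]
  push_cast
  ring_nf

lemma barSign_erase {X : Finset ℕ} {a : ℕ} (ha : a ∈ X) :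
    barSign (X.erase a) = (-1) ^ ((a : ℤ) - 1) * barSign X := by
  conv_rhs => rw [← Finset.insert_erase ha, barSign_insert (Finset.notMem_erase a X), ← mul_assoc]
  rw [← zpow_add, ← two_mul, Even.neg_one_zpow (even_two_mul _), one_mul]

lemma barSign_insert_sub_erase {q a : ℕ} (hq : Odd q) {X : Finset ℕ} (ha : a ∈ X) (hqa : q ≤ a)
    (hn : a - q ∉ X) : barSign (insert (a - q) (X.erase a)) = -barSign X := by
  rw [barSign_insert fun h => hn (Finset.mem_of_mem_erase h), barSign_erase ha, ← mul_assoc,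
    ← zpow_add, Nat.cast_sub hqa, Odd.neg_one_zpow, neg_one_mul]
  obtain ⟨m, rfl⟩ := hq
  exact ⟨(a : ℤ) - m - 2, by omega⟩

lemma barSign_erase_of_odd {q : ℕ} (hq : Odd q) {X : Finset ℕ} (hqX : q ∈ X) :
    barSign (X.erase q) = barSign X := by
  rw [barSign_erase hqX, Even.neg_one_zpow, one_mul]
  obtain ⟨m, rfl⟩ := hq
  exact ⟨m, by omega⟩

lemma barSign_erase_erase {a b : ℕ} (hab : Odd (a + b)) {X : Finset ℕ} (ha : a ∈ X) (hb : b ∈ X)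
    (hne : b ≠ a) : barSign ((X.erase a).erase b) = -barSign X := by
  rw [barSign_erase (Finset.mem_erase.2 ⟨hne, hb⟩), barSign_erase ha, ← mul_assoc, ← zpow_add,
    Odd.neg_one_zpow, neg_one_mul]
  obtain ⟨m, hm⟩ := hab
  exact ⟨m - 1, by omega⟩

lemma IsBarRemoval.barSign_eq_iff {q : ℕ} (hq : Odd q) {X Y : Finset ℕ}
    (hY : IsBarRemoval q X Y) : barSign Y = barSign X ↔ q ∈ X ∧ Y = X.erase q := by
  refine ⟨fun hs => ?_, fun ⟨hqX, hYX⟩ => hYX ▸ barSign_erase_of_odd hq hqX⟩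
  rcases hY with ⟨a, ha, hqa, hn, rfl⟩ | hYX | ⟨a, b, ha, hb, hba, rfl, rfl⟩
  · exact (units_ne_neg_self _ (hs.symm.trans (barSign_insert_sub_erase hq ha hqa.le hn))).elim
  · exact hYX
  · exact (units_ne_neg_self _ (hs.symm.trans (barSign_erase_erase hq ha hb hba.ne))).elim

theorem stmt_12_general (q : ℕ) (hq : Odd q) (X : Finset ℕ) :
    (∀ Y : Finset ℕ,
      ((∃ a ∈ X, q < a ∧ a - q ∉ X ∧ Y = insert (a - q) (X.erase a)) ∨
       (∃ a b, a ∈ X ∧ b ∈ X ∧ b < a ∧ a + b = q ∧ Y = (X.erase a).erase b)) →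
      barSign Y = -barSign X) ∧
    (∀ Y : Finset ℕ, IsBarRemoval q X Y →
      (barSign Y = barSign X ↔ q ∈ X ∧ Y = X.erase q)) ∧
    (∀ Y : Finset ℕ, IsBarRemoval q X Y → barSign Y = barSign X → Y = X.erase q) := by
  refine ⟨?_, fun Y hY => hY.barSign_eq_iff hq, fun Y hY hs => ((hY.barSign_eq_iff hq).1 hs).2⟩
  rintro Y (⟨a, ha, hqa, hn, rfl⟩ | ⟨a, b, ha, hb, hba, rfl, rfl⟩)
  · exact barSign_insert_sub_erase hq ha hqa.le hn
  · exact barSign_erase_erase hq ha hb hba.ne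

/-- Let `X` be a bar partition with `σ(X) = 1` and `q` odd.  If `Y` is
obtained from `X` by removing a `q`-bar of mixed or hook type (decreasing a part, or
removing two parts), then `σ(Y) = -σ(X)`; and for any removal of a `q`-bar,
`σ(Y) = σ(X)` iff the bar is a whole part of length `q`, i.e. `Y = X ∖ {q}`.  In
particular `{Y ∈ M_q(X) : σ(Y) = σ(X)}` is empty or equal to `{X ∖ {q}}`. -/
theorem stmt_12 (q : ℕ) (hq : Odd q) (X : Finset ℕ) (h0 : 0 ∉ X)
    (hsign : barSign X = 1) :
    (∀ Y : Finset ℕ,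
      ((∃ a ∈ X, q < a ∧ a - q ∉ X ∧ Y = insert (a - q) (X.erase a)) ∨
       (∃ a b, a ∈ X ∧ b ∈ X ∧ b < a ∧ a + b = q ∧ Y = (X.erase a).erase b)) →
      barSign Y = -barSign X) ∧
    (∀ Y : Finset ℕ, IsBarRemoval q X Y →
      (barSign Y = barSign X ↔ q ∈ X ∧ Y = X.erase q)) ∧
    (∀ Y : Finset ℕ, IsBarRemoval q X Y → barSign Y = barSign X → Y = X.erase q) :=
  stmt_12_general q hq X
end
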